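/- arXiv:2512.01997 — 7 statements merged into one kernel-verified Lean document; each statement's English description precedes it below -/
import Mathlib

section
/- Let S ⊆ ℕ be a set of positive integers. If S is 2-large, then S is a set of one-dimensional Bohr recurrence: for every real number α and every ε > 0, there exists s ∈ S such that ‖s·α‖_{ℝ/ℤ} < ε. -/
private lemma fract_step (x γ : ℝ) (n : ℕ) :
    Int.fract (x + (n + 1 : ℕ) * γ) = Int.fract (Int.fract (x + n * γ) + γ) := by
  have h : Int.fract (x + n * γ) + γ
      = (x + (n + 1 : ℕ) * γ) - (⌊x + n * γ⌋ : ℤ) := by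
    rw [Int.fract]; push_cast; ring
  rw [h, Int.fract_sub_intCast]

private lemma aux_inc (ε γ x : ℝ) (hε : 0 < ε) (h1 : ε ≤ γ) (h2 : γ ≤ 1/2) (L : ℕ)
    (hsame : ∀ n < L, (Int.fract (x + n * γ) < 1/2 ↔ Int.fract x < 1/2)) :
    ∀ n < L, Int.fract x + n * ε ≤ Int.fract (x + n * γ) := by
  intro n
  induction n with
  | zero => intro _; simp
  | succ n ih =>
    intro hn
    have hnL : n < L := Nat.lt_of_succ_lt hn
    have ihn := ih hnL
    set y := Int.fract (x + n * γ) with hy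
    have hy0 : 0 ≤ y := Int.fract_nonneg _
    have hy1 : y < 1 := Int.fract_lt_one _
    have key : Int.fract (x + (n + 1 : ℕ) * γ) = Int.fract (y + γ) := fract_step x γ n
    by_cases hlt : y + γ < 1
    · have : Int.fract (y + γ) = y + γ :=
        Int.fract_eq_self.2 ⟨by linarith, hlt⟩
      rw [key, this]
      push_cast

      linarith
    · exfalso
      push_neg at hlt
      have h3 : Int.fract (y + γ) = y + γ - 1 := by
        have : Int.fract (y + γ - 1) = y + γ - 1 :=
          Int.fract_eq_self.2 ⟨by linarith, by linarith⟩
        calc Int.fract (y + γ) = Int.fract (y + γ - 1 + 1) := by ring_nf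
          _ = Int.fract (y + γ - 1) := by
              rw [show y + γ - 1 + 1 = (y + γ - 1) + ((1 : ℤ) : ℝ) by push_cast; ring,
                Int.fract_add_intCast]
          _ = y + γ - 1 := this
      have hylarge : ¬ y < 1/2 := by push_neg; linarith
      have hx_large : ¬ Int.fract x < 1/2 := fun hc => hylarge ((hsame n hnL).2 hc)
      have hsmall : Int.fract (x + (n + 1 : ℕ) * γ) < 1/2 := by
        rw [key, h3]; linarith
      exact hx_large ((hsame (n + 1) hn).1 hsmall)

private lemma aux_dec (ε γ x : ℝ) (hε : 0 < ε) (h1 : 1/2 < γ) (h2 : γ ≤ 1 - ε) (L : ℕ)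
    (hsame : ∀ n < L, (Int.fract (x + n * γ) < 1/2 ↔ Int.fract x < 1/2)) :
    ∀ n < L, Int.fract (x + n * γ) ≤ Int.fract x - n * ε := by
  intro n
  induction n with
  | zero => intro _; simp
  | succ n ih =>
    intro hn
    have hnL : n < L := Nat.lt_of_succ_lt hn
    have ihn := ih hnL
    set y := Int.fract (x + n * γ) with hy
    have hy0 : 0 ≤ y := Int.fract_nonneg _
    have hy1 : y < 1 := Int.fract_lt_one _
    have key : Int.fract (x + (n + 1 : ℕ) * γ) = Int.fract (y + γ) := fract_step x γ n
    by_cases hge : 1 ≤ y + γ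
    · have h3 : Int.fract (y + γ) = y + γ - 1 := by
        have : Int.fract (y + γ - 1) = y + γ - 1 :=
          Int.fract_eq_self.2 ⟨by linarith, by linarith⟩
        calc Int.fract (y + γ) = Int.fract (y + γ - 1 + 1) := by ring_nf
          _ = Int.fract (y + γ - 1) := by
              rw [show y + γ - 1 + 1 = (y + γ - 1) + ((1 : ℤ) : ℝ) by push_cast; ring,
                Int.fract_add_intCast]
          _ = y + γ - 1 := this
      rw [key, h3]
      push_cast

      linarith
    · exfalso
      push_neg at hge
      have h3 : Int.fract (y + γ) = y + γ :=
        Int.fract_eq_self.2 ⟨by linarith, hge⟩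
      have hysmall : y < 1/2 := by linarith
      have hx_small : Int.fract x < 1/2 := (hsame n hnL).1 hysmall
      have hbig : ¬ Int.fract (x + (n + 1 : ℕ) * γ) < 1/2 := by
        rw [key, h3]; push_neg; linarith
      exact hbig ((hsame (n + 1) hn).2 hx_small)

/-- If `S` is 2-large, then `S` is a set of one-dimensional Bohr recurrence. -/
theorem one_dim_bohr_recurrent_of_two_large
    (S : Set ℕ) (hSpos : ∀ s ∈ S, 0 < s)
    (h2large : ∀ (c : ℕ → Bool) (L : ℕ),
      ∃ a : ℕ, ∃ s ∈ S, ∀ n < L, c (a + n * s) = c a) :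
    ∀ (α ε : ℝ), 0 < ε → ∃ s ∈ S, ∃ m : ℤ, |(s : ℝ) * α - (m : ℝ)| < ε := by
  intro α ε hε
  by_contra hcon
  push_neg at hcon
  set L : ℕ := ⌈1/ε⌉₊ + 2 with hL
  set c : ℕ → Bool := fun n => decide (Int.fract ((n : ℝ) * α) < 1/2) with hc
  obtain ⟨a, s, hsS, hmono⟩ := h2large c L
  set γ₀ : ℝ := (s : ℝ) * α with hγ₀
  set γ : ℝ := Int.fract γ₀ with hγ
  have hγ0 : 0 ≤ γ := Int.fract_nonneg _
  have hγlt1 : γ < 1 := Int.fract_lt_one _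
  have hγ1 : ε ≤ γ := by
    have := hcon s hsS ⌊γ₀⌋
    rwa [show γ₀ - (⌊γ₀⌋ : ℝ) = γ from rfl, abs_of_nonneg hγ0] at this
  have hγ2 : γ ≤ 1 - ε := by
    have := hcon s hsS (⌊γ₀⌋ + 1)
    have habs : |γ₀ - ((⌊γ₀⌋ + 1 : ℤ) : ℝ)| = 1 - γ := by
      push_cast
      rw [show γ₀ - ((⌊γ₀⌋ : ℝ) + 1) = -(1 - γ) by rw [hγ, Int.fract]; ring,
        abs_neg, abs_of_nonneg (by linarith)]
    rw [habs] at this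
    linarith
  set x : ℝ := (a : ℝ) * α with hx
  have hsame : ∀ n < L, (Int.fract (x + n * γ) < 1/2 ↔ Int.fract x < 1/2) := by
    intro n hn
    have hcn := hmono n hn
    have heq1 : Int.fract (((a + n * s : ℕ) : ℝ) * α) = Int.fract (x + n * γ) := by
      have : ((a + n * s : ℕ) : ℝ) * α = (x + n * γ) + ((n * ⌊γ₀⌋ : ℤ) : ℝ) := by
        rw [hγ, Int.fract]; push_cast; ring
      rw [this, Int.fract_add_intCast]
    simp only [hc, decide_eq_decide] at hcn
    rw [heq1] at hcn
    exact hcn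
  have hL1 : 1 < ((L - 1 : ℕ) : ℝ) * ε := by
    have h1 : (L - 1 : ℕ) = ⌈1/ε⌉₊ + 1 := rfl
    rw [h1]
    push_cast
    have h2 : 1/ε ≤ (⌈1/ε⌉₊ : ℝ) := Nat.le_ceil _
    have h3 : 1/ε * ε = 1 := by field_simp
    nlinarith
  have hLlt : (L - 1 : ℕ) < L := by omega
  by_cases hγhalf : γ ≤ 1/2
  · have := aux_inc ε γ x hε hγ1 hγhalf L hsame (L - 1) hLlt
    have h5 : Int.fract (x + ((L - 1 : ℕ) : ℝ) * γ) < 1 := Int.fract_lt_one _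
    have h6 : 0 ≤ Int.fract x := Int.fract_nonneg _
    linarith
  · push_neg at hγhalf
    have := aux_dec ε γ x hε hγhalf hγ2 L hsame (L - 1) hLlt
    have h5 : 0 ≤ Int.fract (x + ((L - 1 : ℕ) : ℝ) * γ) := Int.fract_nonneg _
    have h6 : Int.fract x < 1 := Int.fract_lt_one _
    linarith
end

section
/- There exists a positive integer d₀ such that for every d ≥ d₀ the following holds: for every 2-coloring c : (ℝ/ℤ)^d → Bool (i.e., c : (Fin d → ℝ/ℤ) → Bool), there exist a point x ∈ (ℝ/ℤ)^d and a nonzero common difference s ∈ (ℝ/ℤ)^d, each of whose coordinates is the image in ℝ/ℤ of 0 or of 1/3, such that the infinite arithmetic progression x, x+s, x+2s, … is monochromatic: c(x + n·s) = c(x) for every n ∈ ℕ. -/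
/-!
By the Hales–Jewett theorem over the alphabet `ZMod 3`, in high dimension every 2-coloring of
`(ZMod 3)^d` has a monochromatic combinatorial line `l`. Over a ring a line is the progression
`l x = l 0 + x • δ`, with `δ` the `0/1` indicator of its active coordinates, so `n ↦ l n` is a
monochromatic progression with difference `δ`. The embedding `j ↦ j / 3` of `ZMod 3` into `ℝ/ℤ`,
applied coordinatewise, carries it to the torus.
-/

namespace Combinatorics.Line

variable {α ι ι' R : Type*}

noncomputable def extend (l : Line α ι) {e : ι → ι'} (he : Function.Injective e) (a : α) :
    Line α ι' where
  idxFun := Function.extend e l.idxFun fun _ ↦ some a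
  proper := by
    obtain ⟨i, hi⟩ := l.proper
    exact ⟨e i, by rw [he.extend_apply, hi]⟩

theorem extend_apply (l : Line α ι) {e : ι → ι'} (he : Function.Injective e) (a x : α) :
    l.extend he a x = Function.extend e (l x) fun _ ↦ a := by
  funext j
  exact Function.apply_extend (fun o ↦ o.getD x) e (fun _ ↦ some a) j

theorem exists_mono_of_le_card (α : Type*) [Finite α] [Nonempty α] (κ : Type*) [Finite κ] :
    ∃ n : ℕ, ∀ (η : Type*) [Fintype η], n ≤ Fintype.card η →
      ∀ C : (η → α) → κ, ∃ l : Line α η, l.IsMono C := by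
  obtain ⟨ι, _, hι⟩ := exists_mono_in_high_dimension α κ
  refine ⟨Fintype.card ι, fun η _ hcard C ↦ ?_⟩
  obtain ⟨e⟩ := Function.Embedding.nonempty_of_card_le hcard
  let a : α := Classical.arbitrary α
  obtain ⟨l, col, hl⟩ := hι fun v ↦ C (Function.extend e v fun _ ↦ a)
  exact ⟨l.extend e.injective a, col, fun x ↦ by rw [extend_apply]; exact hl x⟩

def direction [Zero R] [One R] (l : Line R ι) : ι → R :=
  fun i ↦ if l.idxFun i = none then 1 else 0

theorem direction_apply_eq_zero_or_eq_one [Zero R] [One R] (l : Line R ι) (i : ι) :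
    l.direction i = 0 ∨ l.direction i = 1 := by
  unfold direction
  split_ifs <;> simp

theorem direction_ne_zero [Zero R] [One R] [NeZero (1 : R)] (l : Line R ι) :
    l.direction ≠ 0 := by
  obtain ⟨i, hi⟩ := l.proper
  intro h
  simpa [direction, hi] using congrFun h i

theorem apply_eq_apply_zero_add_smul_direction [NonAssocSemiring R] (l : Line R ι) (x : R) :
    l x = l 0 + x • l.direction := by
  funext i
  cases hi : l.idxFun i <;> simp [direction, hi]

end Combinatorics.Line

open Combinatorics

/-- For all sufficiently large `d`, any 2-coloring of the torus `(ℝ/ℤ)^d` contains an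
infinitely long monochromatic arithmetic progression whose nonzero common difference has
all coordinates equal to (the image of) `0` or `1/3`. -/
theorem torus_two_coloring_infinite_AP :
    ∃ d₀ : ℕ, 0 < d₀ ∧ ∀ d : ℕ, d₀ ≤ d →
      ∀ c : (Fin d → AddCircle (1 : ℝ)) → Bool,
        ∃ x s : Fin d → AddCircle (1 : ℝ), s ≠ 0 ∧
          (∀ i : Fin d, s i = ((0 : ℝ) : AddCircle (1 : ℝ)) ∨
            s i = ((1 / 3 : ℝ) : AddCircle (1 : ℝ))) ∧
          ∀ n : ℕ, c (x + n • s) = c x := by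
  obtain ⟨d₀, hd₀⟩ := Line.exists_mono_of_le_card (ZMod 3) Bool
  refine ⟨d₀ + 1, d₀.succ_pos, fun d hd c ↦ ?_⟩
  let Φ := (ZMod.toAddCircle (N := 3)).compLeft (Fin d)
  have hΦ : Function.Injective Φ := (ZMod.toAddCircle_injective 3).comp_left
  obtain ⟨l, col, hl⟩ := hd₀ (Fin d) (by rw [Fintype.card_fin]; omega) (c ∘ Φ)
  refine ⟨Φ (l 0), Φ l.direction, ?_, fun i ↦ ?_, fun n ↦ ?_⟩
  · exact (map_ne_zero_iff Φ hΦ).mpr l.direction_ne_zero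
  · rcases l.direction_apply_eq_zero_or_eq_one i with h | h
    · left; simp [Φ, h]
    · right; simpa [Φ, h] using ZMod.toAddCircle_natCast (N := 3) 1
  · calc c (Φ (l 0) + n • Φ l.direction)
        = c (Φ (l (n : ZMod 3))) := by
          rw [l.apply_eq_apply_zero_add_smul_direction (n : ZMod 3), Nat.cast_smul_eq_nsmul,
            map_add, map_nsmul]
      _ = c (Φ (l 0)) := (hl _).trans (hl 0).symm
end

section
/- There exists a positive integer d₀ such that for every d ≥ d₀ and every 2-coloring c : (ℤ/3ℤ)^d → Bool, there exist x ∈ (ℤ/3ℤ)^d and a nonzero s ∈ (ℤ/3ℤ)^d, every coordinate of which equals 0 or 1, such that c(x) = c(x + s) = c(x + 2s). -/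
open Combinatorics

/-- Hales–Jewett consequence: for all sufficiently large `d`, any 2-coloring of
`(ℤ/3ℤ)^d` contains a monochromatic 3-term arithmetic progression whose nonzero common
difference has all coordinates `0` or `1`. -/
theorem zmod3_two_coloring_three_AP :
    ∃ d₀ : ℕ, 0 < d₀ ∧ ∀ d : ℕ, d₀ ≤ d →
      ∀ c : (Fin d → ZMod 3) → Bool,
        ∃ x s : Fin d → ZMod 3, s ≠ 0 ∧ (∀ i : Fin d, s i = 0 ∨ s i = 1) ∧
          c x = c (x + s) ∧ c x = c (x + 2 • s) := by
  obtain ⟨ι, hfin, hHJ⟩ := Line.exists_mono_in_high_dimension (ZMod 3) Bool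
  set n := Fintype.card ι with hn
  let e : ι ≃ Fin n := Fintype.equivFin ι
  refine ⟨max n 1, lt_of_lt_of_le one_pos (le_max_right _ _), ?_⟩
  intro d hd c
  have hnd : n ≤ d := le_trans (le_max_left _ _) hd
  let pad : (ι → ZMod 3) → Fin d → ZMod 3 := fun v i =>
    if h : (i : ℕ) < n then v (e.symm ⟨i, h⟩) else 0
  obtain ⟨l, b, hb⟩ := hHJ (fun v => c (pad v))
  let s : Fin d → ZMod 3 := fun i => if h : (i : ℕ) < n then
      (if l.idxFun (e.symm ⟨i, h⟩) = none then 1 else 0) else 0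
  refine ⟨pad (l 0), s, ?_, ?_, ?_, ?_⟩
  · obtain ⟨j, hj⟩ := l.proper
    intro h0
    have h1 : ((Fin.castLE hnd (e j) : Fin d) : ℕ) < n := (e j).2
    have := congrFun h0 (Fin.castLE hnd (e j))
    simp only [s, dif_pos h1] at this
    have he : e.symm ⟨((Fin.castLE hnd (e j) : Fin d) : ℕ), h1⟩ = j := by
      simp [Fin.ext_iff]
    rw [he, if_pos hj] at this
    exact one_ne_zero (this.trans (Pi.zero_apply _))
  · intro i
    by_cases h : (i : ℕ) < n
    · by_cases h2 : l.idxFun (e.symm ⟨i, h⟩) = none <;> simp [s, h, h2]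
    · simp [s, h]
  · have key : pad (l 1) = pad (l 0) + s := by
      funext i
      by_cases h : (i : ℕ) < n
      · simp only [Pi.add_apply, pad, s, dif_pos h, Line.coe_apply]
        cases h2 : l.idxFun (e.symm ⟨i, h⟩) <;> simp [h2]
      · simp [pad, s, h]
    rw [← key]; exact (hb 0).trans (hb 1).symm
  · have key : pad (l 2) = pad (l 0) + 2 • s := by
      funext i
      by_cases h : (i : ℕ) < n
      · simp only [Pi.add_apply, Pi.smul_apply, pad, s, dif_pos h, Line.coe_apply]
        cases h2 : l.idxFun (e.symm ⟨i, h⟩) <;> simp [h2]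
      · simp [pad, s, h]
    rw [← key]; exact (hb 0).trans (hb 2).symm
end

section
/- Let X be a finite set, let m be a positive integer, and let 𝒜 be a finite family of subsets of X such that every A ∈ 𝒜 has at least m elements and the number of sets in 𝒜 is strictly less than 2^(m−1). Then there exists a 2-coloring c : X → Bool such that no A ∈ 𝒜 is monochromatic, i.e., for every A ∈ 𝒜 there exist a, b ∈ A with c(a) ≠ c(b). -/
set_option maxHeartbeats 1000000

open Finset

lemma mono_count {X : Type*} [Fintype X] [DecidableEq X] (A : Finset X) (hA : A.Nonempty) :
    (Finset.univ.filter (fun c : X → Bool => ∀ a ∈ A, ∀ b ∈ A, c a = c b)).card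
      ≤ 2 * 2 ^ (Fintype.card X - A.card) := by
  obtain ⟨a₀, ha₀⟩ := hA
  have key := Finset.card_le_card_of_injOn
    (f := fun c : X → Bool => ((c a₀, fun x => c x.1) : Bool × ({x // x ∈ Aᶜ} → Bool)))
    (t := (Finset.univ : Finset (Bool × ({x // x ∈ Aᶜ} → Bool))))
    (s := Finset.univ.filter (fun c : X → Bool => ∀ a ∈ A, ∀ b ∈ A, c a = c b))
    (fun c _ => Finset.mem_univ _)
    (by
      intro c hc c' hc' heq
      simp only [Finset.mem_coe, Finset.mem_filter] at hc hc'
      obtain ⟨h1, h2⟩ := Prod.mk.injEq .. ▸ heq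
      funext x
      by_cases hx : x ∈ A
      · rw [hc.2 x hx a₀ ha₀, hc'.2 x hx a₀ ha₀, h1]
      · exact congrFun h2 ⟨x, by simpa using hx⟩)
  calc (Finset.univ.filter (fun c : X → Bool => ∀ a ∈ A, ∀ b ∈ A, c a = c b)).card
      ≤ (Finset.univ : Finset (Bool × ({x // x ∈ Aᶜ} → Bool))).card := key
    _ = 2 * 2 ^ (Fintype.card X - A.card) := by
        rw [Finset.card_univ, Fintype.card_prod, Fintype.card_fun, Fintype.card_bool,
          Fintype.card_coe, Finset.card_compl]

/-- Union-bound lemma: if every set in the family `𝒜` has at least `m` elements and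
`|𝒜| < 2^(m-1)`, then some 2-coloring of `X` makes no `A ∈ 𝒜` monochromatic. -/
theorem exists_coloring_no_monochromatic
    (X : Type*) [Fintype X] (m : ℕ) (hm : 0 < m)
    (𝒜 : Finset (Finset X)) (hsize : ∀ A ∈ 𝒜, m ≤ A.card)
    (hcard : 𝒜.card < 2 ^ (m - 1)) :
    ∃ c : X → Bool, ∀ A ∈ 𝒜, ∃ a ∈ A, ∃ b ∈ A, c a ≠ c b := by
  classical
  by_contra h
  push_neg at h
  -- handle the empty family case
  rcases 𝒜.eq_empty_or_nonempty with h𝒜 | ⟨A₀, hA₀⟩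
  · obtain ⟨A, hA, -⟩ := h (fun _ => true)
    simp [h𝒜] at hA
  have hXm : m ≤ Fintype.card X :=
    le_trans (hsize A₀ hA₀) (Finset.card_le_card (Finset.subset_univ A₀) |>.trans_eq
      (Finset.card_univ))
  -- every coloring lies in the union of the "monochromatic on A" sets
  have hsub : (Finset.univ : Finset (X → Bool)) ⊆
      𝒜.biUnion (fun A => Finset.univ.filter (fun c => ∀ a ∈ A, ∀ b ∈ A, c a = c b)) := by
    intro c _
    obtain ⟨A, hA, hmono⟩ := h c
    exact Finset.mem_biUnion.mpr ⟨A, hA, Finset.mem_filter.mpr ⟨Finset.mem_univ _, hmono⟩⟩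
  have h1 := Finset.card_le_card hsub
  have h2 : (𝒜.biUnion (fun A => Finset.univ.filter
      (fun c : X → Bool => ∀ a ∈ A, ∀ b ∈ A, c a = c b))).card
      ≤ ∑ A ∈ 𝒜, (Finset.univ.filter
        (fun c : X → Bool => ∀ a ∈ A, ∀ b ∈ A, c a = c b)).card :=
    Finset.card_biUnion_le
  have h3 : ∑ A ∈ 𝒜, (Finset.univ.filter
      (fun c : X → Bool => ∀ a ∈ A, ∀ b ∈ A, c a = c b)).card
      ≤ ∑ _A ∈ 𝒜, (2 * 2 ^ (Fintype.card X - m)) := by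
    apply Finset.sum_le_sum
    intro A hA
    have hAne : A.Nonempty := Finset.card_pos.mp (lt_of_lt_of_le hm (hsize A hA))
    refine le_trans (mono_count A hAne) ?_
    have : Fintype.card X - A.card ≤ Fintype.card X - m :=
      Nat.sub_le_sub_left (hsize A hA) _
    exact Nat.mul_le_mul_left 2 (Nat.pow_le_pow_right (by norm_num) this)
  have h4 : (Finset.univ : Finset (X → Bool)).card = 2 ^ Fintype.card X := by
    simp [Finset.card_univ, Fintype.card_fun]
  rw [Finset.sum_const, smul_eq_mul] at h3
  have hbound : (2 : ℕ) ^ Fintype.card X ≤ 𝒜.card * (2 * 2 ^ (Fintype.card X - m)) :=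
    h4 ▸ le_trans h1 (le_trans h2 h3)
  have hlt : 𝒜.card * (2 * 2 ^ (Fintype.card X - m)) < 2 ^ Fintype.card X := by
    have hpos : 0 < 2 * 2 ^ (Fintype.card X - m) := by positivity
    calc 𝒜.card * (2 * 2 ^ (Fintype.card X - m))
        < 2 ^ (m - 1) * (2 * 2 ^ (Fintype.card X - m)) :=
          Nat.mul_lt_mul_of_lt_of_le hcard le_rfl hpos
      _ = 2 ^ Fintype.card X := by
          rw [← pow_succ', ← pow_add]
          congr 1
          clear h hsub h1 h2 h3 h4; omega
  exact absurd hbound (not_le.mpr hlt)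
end

section
/- Let S ⊆ ℕ be a set of positive integers. Suppose there exist a positive integer d, real numbers α₁, …, α_d, and δ > 0 such that for every s ∈ S there is some 1 ≤ i ≤ d with ‖s·αᵢ‖_{ℝ/ℤ} > δ. Then there exist a positive integer r and a coloring c : ℕ → Fin r such that c(x + s) ≠ c(x) for every x ∈ ℕ and every s ∈ S. In particular, S is not large: this finite coloring admits no monochromatic arithmetic progression of length 2 (hence none of any length ≥ 2) with common difference in S. -/
/-!
Choose `N` with `1 / N < δ` and color `n` by the cube of side `1 / N` of the torus `(ℝ/ℤ)^d`
containing `(n α_i mod 1)_i`. If `x` and `x + s` get the same color, then for every `i` the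
points `x α_i` and `(x + s) α_i` are within `1 / N` of each other modulo `1`, so `‖s α_i‖ < δ`
for all `i`; hence `s ∉ S`.
-/

noncomputable def fractCell (N : ℕ) [NeZero N] (x : ℝ) : Fin N :=
  ⟨⌊Int.fract x * N⌋₊, (Nat.floor_lt (by positivity)).2 <| by
    simpa using mul_lt_mul_of_pos_right (Int.fract_lt_one x)
      (Nat.cast_pos.2 (Nat.pos_of_neZero N) : (0 : ℝ) < N)⟩

theorem abs_fract_sub_fract_lt_of_fractCell_eq {N : ℕ} [NeZero N] {x y : ℝ}
    (h : fractCell N x = fractCell N y) : |Int.fract x - Int.fract y| < 1 / N := by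
  have hN : (0 : ℝ) < N := Nat.cast_pos.2 (Nat.pos_of_neZero N)
  have hfloor : ⌊Int.fract x * N⌋ = ⌊Int.fract y * N⌋ := by
    rw [← Int.natCast_floor_eq_floor (by positivity),
      ← Int.natCast_floor_eq_floor (by positivity)]
    exact congrArg (fun k : Fin N => (k : ℤ)) h
  have hlt := Int.abs_sub_lt_one_of_floor_eq_floor hfloor
  rw [← sub_mul, abs_mul, abs_of_pos hN] at hlt
  rwa [lt_div_iff₀ hN]

theorem exists_int_abs_sub_sub_lt_of_fractCell_eq {N : ℕ} [NeZero N] {x y : ℝ}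
    (h : fractCell N x = fractCell N y) : ∃ m : ℤ, |x - y - m| < 1 / N := by
  refine ⟨⌊x⌋ - ⌊y⌋, ?_⟩
  have hsub : x - y - ((⌊x⌋ - ⌊y⌋ : ℤ) : ℝ) = Int.fract x - Int.fract y := by
    simp only [Int.fract, Int.cast_sub]
    ring
  rw [hsub]
  exact abs_fract_sub_fract_lt_of_fractCell_eq h

noncomputable def bohrCell {ι : Type*} (N : ℕ) [NeZero N] (α : ι → ℝ) (n : ℕ) : ι → Fin N :=
  fun i => fractCell N (n * α i)

theorem exists_int_abs_mul_sub_lt_of_bohrCell_add_eq {ι : Type*} {N : ℕ} [NeZero N]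
    {α : ι → ℝ} {x s : ℕ} (h : bohrCell N α (x + s) = bohrCell N α x) (i : ι) :
    ∃ m : ℤ, |s * α i - m| < 1 / N := by
  obtain ⟨m, hm⟩ := exists_int_abs_sub_sub_lt_of_fractCell_eq (congrFun h i)
  refine ⟨m, ?_⟩
  rwa [Nat.cast_add, add_mul, add_sub_cancel_left] at hm

theorem not_large_of_not_bohr_recurrent_general
    (S : Set ℕ)
    (d : ℕ) (α : Fin d → ℝ) (δ : ℝ) (hδ : 0 < δ)
    (hS : ∀ s ∈ S, ∃ i : Fin d, ∀ m : ℤ, δ < |(s : ℝ) * α i - (m : ℝ)|) :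
    ∃ (r : ℕ), 0 < r ∧ ∃ c : ℕ → Fin r,
      ∀ x : ℕ, ∀ s ∈ S, c (x + s) ≠ c x := by
  obtain ⟨N, hN⟩ := exists_nat_one_div_lt hδ
  let e := Fintype.equivFin (Fin d → Fin (N + 1))
  refine ⟨_, Fintype.card_pos, fun n => e (bohrCell (N + 1) α n), fun x s hs hc => ?_⟩
  obtain ⟨i, hi⟩ := hS s hs
  obtain ⟨m, hm⟩ := exists_int_abs_mul_sub_lt_of_bohrCell_add_eq (e.injective hc) i
  rw [Nat.cast_succ] at hm
  exact lt_asymm (hi m) (hm.trans hN)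

/-- If `S` is not a set of Bohr recurrence, then there is a finite coloring of `ℕ` in
which no two elements differing by an element of `S` share a color; in particular `S` is
not large. -/
theorem not_large_of_not_bohr_recurrent
    (S : Set ℕ) (hSpos : ∀ s ∈ S, 0 < s)
    (d : ℕ) (hd : 0 < d) (α : Fin d → ℝ) (δ : ℝ) (hδ : 0 < δ)
    (hS : ∀ s ∈ S, ∃ i : Fin d, ∀ m : ℤ, δ < |(s : ℝ) * α i - (m : ℝ)|) :
    ∃ (r : ℕ), 0 < r ∧ ∃ c : ℕ → Fin r,
      ∀ x : ℕ, ∀ s ∈ S, c (x + s) ≠ c x :=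
  not_large_of_not_bohr_recurrent_general S d α δ hδ hS
end

section
/- Let δ be a real number with 0 < δ ≤ 1/2 and set L = ⌈1/δ⌉ + 1. Then for every real x and every real s with ‖s‖_{ℝ/ℤ} ≥ δ, the fractional parts {x}, {x+s}, {x+2s}, …, {x+Ls} neither all lie in [0, 1/2) nor all lie in [1/2, 1). Equivalently, under the 2-coloring of ℝ/ℤ in which [0,1/2) is red and [1/2,1) is blue, every monochromatic arithmetic progression whose common difference s satisfies ‖s‖_{ℝ/ℤ} ≥ δ has length at most L. -/
private lemma fract_add_eq (a b : ℝ) : Int.fract (a + b) = Int.fract (Int.fract a + Int.fract b) := by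
  have h : a + b = (Int.fract a + Int.fract b) + ((⌊a⌋ + ⌊b⌋ : ℤ) : ℝ) := by
    rw [← Int.self_sub_floor, ← Int.self_sub_floor]; push_cast; ring
  rw [h, Int.fract_add_intCast]

private lemma core_step (L : ℕ) (x s : ℝ) (hb1 : 0 < Int.fract s) (hb2 : Int.fract s ≤ 1/2)
    (hL : 1 ≤ (L : ℝ) * Int.fract s) :
    ¬ ((∀ n : ℕ, n ≤ L → Int.fract (x + (n : ℝ) * s) < 1/2) ∨
       (∀ n : ℕ, n ≤ L → 1/2 ≤ Int.fract (x + (n : ℝ) * s))) := by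
  intro h
  have key : ∀ n : ℕ, n ≤ L →
      Int.fract (x + (n : ℝ) * s) = Int.fract x + (n : ℝ) * Int.fract s := by
    intro n hn
    induction n with
    | zero => simp
    | succ m ih =>
      have hm : m ≤ L := by omega
      have ihm := ih hm
      have harg : x + ((m+1 : ℕ) : ℝ) * s = (x + (m : ℝ) * s) + s := by push_cast; ring
      have ha0 : (0:ℝ) ≤ Int.fract (x + (m : ℝ) * s) := Int.fract_nonneg _
      have ha1 : Int.fract (x + (m : ℝ) * s) < 1 := Int.fract_lt_one _
      have hsum : Int.fract (x + (m : ℝ) * s) + Int.fract s < 1 ∨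
          (1 ≤ Int.fract (x + (m : ℝ) * s) + Int.fract s ∧
           Int.fract (x + (m : ℝ) * s) + Int.fract s - 1 < 1/2) := by
        rcases lt_or_ge (Int.fract (x + (m : ℝ) * s) + Int.fract s) 1 with h1 | h1
        · exact Or.inl h1
        · exact Or.inr ⟨h1, by linarith⟩
      rcases h with hred | hblue
      · have ha : Int.fract (x + (m : ℝ) * s) < 1/2 := hred m hm
        have hlt : Int.fract (x + (m : ℝ) * s) + Int.fract s < 1 := by linarith
        rw [harg, fract_add_eq, Int.fract_eq_self.mpr ⟨by positivity, hlt⟩, ihm]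
        push_cast; ring
      · have ha : 1/2 ≤ Int.fract (x + (m : ℝ) * s) := hblue m hm
        have ha' : 1/2 ≤ Int.fract (x + ((m+1 : ℕ) : ℝ) * s) := hblue (m+1) hn
        rcases hsum with hlt | ⟨h1, h2⟩
        · rw [harg, fract_add_eq, Int.fract_eq_self.mpr ⟨by positivity, hlt⟩, ihm]
          push_cast; ring
        · exfalso
          have : Int.fract (x + ((m+1:ℕ) : ℝ) * s) =
              Int.fract (x + (m : ℝ) * s) + Int.fract s - 1 := by
            rw [harg, fract_add_eq]
            have : Int.fract (x + (m : ℝ) * s) + Int.fract s =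
                (Int.fract (x + (m : ℝ) * s) + Int.fract s - 1) + (1 : ℤ) := by push_cast; ring
            rw [this, Int.fract_add_intCast, Int.fract_eq_self.mpr ⟨by linarith, by linarith⟩]
            push_cast; ring
          linarith
  have h1 := key L le_rfl
  have h2 : Int.fract (x + (L : ℝ) * s) < 1 := Int.fract_lt_one _
  have h3 : (0:ℝ) ≤ Int.fract x := Int.fract_nonneg _
  linarith

/-- One-dimensional interval-coloring argument: with `L = ⌈1/δ⌉ + 1`, if
`‖s‖_{ℝ/ℤ} ≥ δ` (with `0 < δ ≤ 1/2`), then the fractional parts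
`{x}, {x+s}, …, {x+Ls}` neither all lie in `[0, 1/2)` nor all lie in `[1/2, 1)`. -/
theorem interval_coloring_bounds_AP_length
    (δ : ℝ) (hδ : 0 < δ) (hδ' : δ ≤ 1 / 2) (x s : ℝ)
    (hs : ∀ m : ℤ, δ ≤ |s - (m : ℝ)|) :
    ¬ ((∀ n : ℕ, n ≤ ⌈1 / δ⌉₊ + 1 → Int.fract (x + (n : ℝ) * s) < 1 / 2) ∨
       (∀ n : ℕ, n ≤ ⌈1 / δ⌉₊ + 1 → 1 / 2 ≤ Int.fract (x + (n : ℝ) * s))) := by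
  set L := ⌈1 / δ⌉₊ + 1 with hLdef
  have hfl : Int.fract s = s - ⌊s⌋ := (Int.self_sub_floor s).symm
  have hflo : δ ≤ Int.fract s := by
    have := hs ⌊s⌋
    rwa [abs_of_nonneg (by linarith [Int.fract_nonneg s, hfl] : (0:ℝ) ≤ s - ⌊s⌋), ← hfl] at this
  have hfhi : Int.fract s ≤ 1 - δ := by
    have := hs (⌊s⌋ + 1)
    have h1 : s - ((⌊s⌋ : ℤ) + 1 : ℤ) = Int.fract s - 1 := by push_cast; rw [hfl]; ring
    rw [h1, abs_of_nonpos (by linarith [Int.fract_lt_one s])] at this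
    linarith
  have hLδ : 1 ≤ (L : ℝ) * δ := by
    have hceil : 1 / δ ≤ (⌈1 / δ⌉₊ : ℝ) := Nat.le_ceil _
    have hL' : 1 / δ ≤ (L : ℝ) := by rw [hLdef]; push_cast; linarith
    calc (1:ℝ) = (1/δ) * δ := by field_simp
    _ ≤ (L : ℝ) * δ := by apply mul_le_mul_of_nonneg_right hL' hδ.le
  intro h
  rcases le_or_gt (Int.fract s) (1/2) with hc | hc
  · exact core_step L x s (lt_of_lt_of_le hδ hflo) hc
      (le_trans hLδ (mul_le_mul_of_nonneg_left hflo (Nat.cast_nonneg _))) h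
  · have hne : Int.fract s ≠ 0 := by linarith
    have hneg : Int.fract (-s) = 1 - Int.fract s := Int.fract_neg hne
    apply core_step L (x + (L : ℝ) * s) (-s) (by rw [hneg]; linarith) (by rw [hneg]; linarith)
      (by rw [hneg]; calc (1:ℝ) ≤ (L:ℝ) * δ := hLδ
            _ ≤ (L:ℝ) * (1 - Int.fract s) := by
              apply mul_le_mul_of_nonneg_left (by linarith) (Nat.cast_nonneg _))
    have heq : ∀ n : ℕ, n ≤ L →
        (x + (L : ℝ) * s) + (n : ℝ) * (-s) = x + ((L - n : ℕ) : ℝ) * s := by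
      intro n hn
      rw [Nat.cast_sub hn]; ring
    rcases h with hred | hblue
    · left; intro n hn; rw [heq n hn]; exact hred (L - n) (by omega)
    · right; intro n hn; rw [heq n hn]; exact hblue (L - n) (by omega)
end

section
/- Let α be an irrational real number and let δ > 0. Then the set S = { n ∈ ℕ : n ≥ 1 and ‖n²·α‖_{ℝ/ℤ} > δ } is not 2-large: there exist a 2-coloring c : ℕ → Bool and a length L ∈ ℕ such that for every a ∈ ℕ and every s ∈ S there exists n < L with c(a + n·s) ≠ c(a). -/
/-!
Colour `n` by whether the fractional part of `n² α / Λ` lies in `[0, 1/2)`, where `Λ` is a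
multiple of every integer below `800`. Along a monochromatic progression `a + n s`, `n < L`, the
quadratic phase `x + w n + v n²` (with `v = s² α / Λ`) stays in a half-circle, so one of the
exponential sums `∑ e(k (x + w n + v n²))`, `k = 1, 2`, is at least `L / 5` in absolute value.
Weyl differencing turns this into `‖t · 2 k v‖ < 50 / L` for at least `L / 100` values `t < L`,
and two such `t` closer than `200` give `‖r v‖ < 100 / L` for some `0 < r < 800`. Since `r ∣ Λ`,
`‖s² α‖ ≤ Λ ‖r v‖ < 100 Λ / L`, which is at most `δ` for `L` large.
-/

open Finset Real
open scoped FourierTransform ComplexConjugate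

noncomputable def distNearestInt (x : ℝ) : ℝ := |x - round x|

lemma distNearestInt_sub_le (x y : ℝ) :
    distNearestInt (x - y) ≤ distNearestInt x + distNearestInt y := by
  calc distNearestInt (x - y) ≤ |x - y - ↑(round x - round y)| := round_le _ _
    _ = |(x - round x) - (y - round y)| := by push_cast; ring_nf
    _ ≤ distNearestInt x + distNearestInt y := abs_sub _ _

lemma distNearestInt_natCast_mul_le (D : ℕ) (x : ℝ) :
    distNearestInt (D * x) ≤ D * distNearestInt x := by
  calc distNearestInt (D * x) ≤ |D * x - ↑((D : ℤ) * round x)| := round_le _ _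
    _ = D * distNearestInt x := by
      push_cast; rw [← mul_sub, abs_mul, Nat.abs_cast, distNearestInt]

lemma distNearestInt_le_mul_distNearestInt_of_dvd {r Λ : ℕ} (hr : r ∣ Λ) (hΛ : 0 < Λ)
    (x : ℝ) : distNearestInt x ≤ Λ * distNearestInt (r * (x / Λ)) := by
  obtain ⟨D, rfl⟩ := hr
  have hr₀ : (0 : ℝ) < r := by exact_mod_cast Nat.pos_of_mul_pos_right hΛ
  have hD₀ : (0 : ℝ) < D := by exact_mod_cast Nat.pos_of_mul_pos_left hΛ
  push_cast
  calc distNearestInt x = distNearestInt (D * (r * (x / (r * D)))) := by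
        congr 1; field_simp
    _ ≤ D * distNearestInt (r * (x / (r * D))) := distNearestInt_natCast_mul_le _ _
    _ ≤ r * D * distNearestInt (r * (x / (r * D))) := by
        gcongr
        · exact abs_nonneg _
        · exact le_mul_of_one_le_left hD₀.le (by exact_mod_cast hr₀)

lemma fourierChar_intCast (n : ℤ) : 𝐞 (n : ℝ) = 1 := by
  rw [fourierChar_apply']
  exact Circle.exp_two_pi_mul_int n

lemma re_fourierChar (x : ℝ) : (𝐞 x : ℂ).re = cos (2 * π * x) :=
  Complex.exp_ofReal_mul_I_re _

lemma four_mul_distNearestInt_le_norm_fourierChar_sub_one (x : ℝ) :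
    4 * distNearestInt x ≤ ‖(𝐞 x : ℂ) - 1‖ := by
  set u := x - round x
  have hx : 𝐞 x = 𝐞 u := by
    rw [AddChar.map_sub_eq_div, fourierChar_intCast, div_one]
  have hu : |π * u| ≤ π / 2 := by
    rw [abs_mul, abs_of_pos pi_pos]
    nlinarith [abs_sub_round x, pi_pos]
  calc 4 * distNearestInt x = 2 * (2 / π * |π * u|) := by
        rw [abs_mul, abs_of_pos pi_pos, distNearestInt]; field_simp; ring
    _ ≤ 2 * |sin (π * u)| := by gcongr; exact mul_abs_le_abs_sin hu
    _ = ‖(𝐞 x : ℂ) - 1‖ := by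
        rw [hx, fourierChar_apply, mul_comm (Complex.ofReal _),
          Complex.norm_exp_I_mul_ofReal_sub_one, norm_mul, Real.norm_eq_abs, Real.norm_eq_abs,
          abs_two]
        ring_nf

lemma norm_geom_sum_le_of_norm_eq_one {𝕜 : Type*} [NormedDivisionRing 𝕜] {z : 𝕜}
    (hz : ‖z‖ = 1) (M : ℕ) : ‖∑ m ∈ range M, z ^ m‖ ≤ M := by
  simpa [norm_pow, hz] using norm_sum_le (range M) (z ^ ·)

lemma norm_geom_sum_le_two_div_of_norm_eq_one {𝕜 : Type*} [NormedDivisionRing 𝕜] {z : 𝕜}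
    (hz : ‖z‖ = 1) (hz1 : z ≠ 1) (M : ℕ) : ‖∑ m ∈ range M, z ^ m‖ ≤ 2 / ‖z - 1‖ := by
  rw [geom_sum_eq hz1, norm_div]
  gcongr
  calc ‖z ^ M - 1‖ ≤ ‖z ^ M‖ + ‖(1 : 𝕜)‖ := norm_sub_le _ _
    _ = 2 := by rw [norm_pow, hz, norm_one]; norm_num

lemma norm_geom_sum_fourierChar_le {b : ℝ} (hb : 0 < distNearestInt b) (M : ℕ) :
    ‖∑ m ∈ range M, (𝐞 b : ℂ) ^ m‖ ≤ 1 / (2 * distNearestInt b) := by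
  have hb4 := four_mul_distNearestInt_le_norm_fourierChar_sub_one b
  have hne : (𝐞 b : ℂ) ≠ 1 := by
    intro h
    rw [h, sub_self, norm_zero] at hb4
    linarith
  calc ‖∑ m ∈ range M, (𝐞 b : ℂ) ^ m‖ ≤ 2 / ‖(𝐞 b : ℂ) - 1‖ :=
        norm_geom_sum_le_two_div_of_norm_eq_one (Circle.norm_coe _) hne M
    _ ≤ 2 / (4 * distNearestInt b) := by gcongr
    _ = 1 / (2 * distNearestInt b) := by field_simp; norm_num

lemma sum_range_sum_range_succ_eq_sum_range_sum_range_sub {M : Type*} [AddCommMonoid M]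
    (g : ℕ → ℕ → M) (L : ℕ) :
    ∑ m ∈ range L, ∑ n ∈ range (m + 1), g m n =
      ∑ t ∈ range L, ∑ n ∈ range (L - t), g (n + t) n := by
  rw [← sum_range_diag_flip]
  refine sum_congr rfl fun m _ => ?_
  rw [← sum_range_reflect]
  refine sum_congr rfl fun k hk => ?_
  rw [mem_range] at hk
  congr 1
  omega

lemma sum_range_sum_range_eq_sum_range_succ_add_sum_range_swap {M : Type*} [AddCommMonoid M]
    (g : ℕ → ℕ → M) (L : ℕ) :
    ∑ m ∈ range L, ∑ n ∈ range L, g m n =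
      ∑ m ∈ range L, ∑ n ∈ range (m + 1), g m n + ∑ m ∈ range L, ∑ n ∈ range m, g n m := by
  induction L with
  | zero => simp
  | succ L ih =>
    simp only [sum_range_succ, sum_add_distrib, ih]
    abel

theorem norm_sum_sq_le_two_mul_sum_norm_sum_mul_conj {𝕜 : Type*} [RCLike 𝕜] (f : ℕ → 𝕜)
    (L : ℕ) :
    ‖∑ n ∈ range L, f n‖ ^ 2 ≤
      2 * ∑ t ∈ range L, ‖∑ n ∈ range (L - t), f (n + t) * conj (f n)‖ := by
  set T : ℕ → 𝕜 := fun t => ∑ n ∈ range (L - t), f (n + t) * conj (f n)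
  obtain _ | L := L
  · simp
  have hsplit : (∑ n ∈ range (L + 1), f n) * conj (∑ n ∈ range (L + 1), f n) =
      ∑ t ∈ range (L + 1), T t + conj (∑ t ∈ range L, T (t + 1)) := by
    rw [map_sum, sum_mul_sum, sum_range_sum_range_eq_sum_range_succ_add_sum_range_swap,
      sum_range_sum_range_succ_eq_sum_range_sum_range_sub,
      sum_range_succ' (fun m => ∑ n ∈ range m, f n * conj (f m)), sum_range_zero, add_zero,
      sum_range_sum_range_succ_eq_sum_range_sum_range_sub]
    simp only [T, map_sum, map_mul, RCLike.conj_conj, Nat.add_sub_add_right, ← add_assoc]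
    congr 1
    exact sum_congr rfl fun t _ => sum_congr rfl fun n _ => mul_comm _ _
  have hshift : ∑ t ∈ range L, ‖T (t + 1)‖ ≤ ∑ t ∈ range (L + 1), ‖T t‖ := by
    rw [sum_range_succ' (fun t => ‖T t‖)]
    exact le_add_of_nonneg_right (norm_nonneg _)
  calc ‖∑ n ∈ range (L + 1), f n‖ ^ 2
      = ‖∑ t ∈ range (L + 1), T t + conj (∑ t ∈ range L, T (t + 1))‖ := by
        rw [← hsplit, norm_mul, RCLike.norm_conj, sq]
    _ ≤ ∑ t ∈ range (L + 1), ‖T t‖ + ∑ t ∈ range L, ‖T (t + 1)‖ := by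
        refine (norm_add_le _ _).trans (add_le_add (norm_sum_le _ _) ?_)
        rw [RCLike.norm_conj]
        exact norm_sum_le _ _
    _ ≤ 2 * ∑ t ∈ range (L + 1), ‖T t‖ := by linarith

lemma fourierChar_quadratic_mul_conj (x w v : ℝ) (n t : ℕ) :
    (𝐞 (x + w * ↑(n + t) + v * ↑(n + t) ^ 2) : ℂ) * conj (𝐞 (x + w * n + v * n ^ 2) : ℂ) =
      𝐞 (w * t + v * t ^ 2) * (𝐞 (t * (2 * v)) : ℂ) ^ n := by
  rw [Circle.starRingEnd_addChar, ← Circle.coe_mul, ← AddChar.map_add_eq_mul, ← Circle.coe_pow,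
    ← AddChar.map_nsmul_eq_pow, ← Circle.coe_mul, ← AddChar.map_add_eq_mul, nsmul_eq_mul]
  congr 2
  push_cast
  ring

lemma norm_sum_fourierChar_quadratic_mul_conj (x w v : ℝ) (L t : ℕ) :
    ‖∑ n ∈ range (L - t),
        (𝐞 (x + w * ↑(n + t) + v * ↑(n + t) ^ 2) : ℂ) * conj (𝐞 (x + w * n + v * n ^ 2) : ℂ)‖ =
      ‖∑ n ∈ range (L - t), (𝐞 (t * (2 * v)) : ℂ) ^ n‖ := by
  simp_rw [fourierChar_quadratic_mul_conj, ← mul_sum, norm_mul, Circle.norm_coe, one_mul]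

theorem div_le_card_filter_distNearestInt_lt (x w v : ℝ) (L : ℕ)
    (hS : (L : ℝ) ≤ 5 * ‖∑ n ∈ range L, (𝐞 (x + w * n + v * n ^ 2) : ℂ)‖) :
    (L : ℝ) / 100 ≤ #{t ∈ range L | distNearestInt (((t : ℕ) : ℝ) * (2 * v)) < 50 / L} := by
  rcases L.eq_zero_or_pos with rfl | hL
  · simp
  have hLpos : (0 : ℝ) < L := by exact_mod_cast hL
  set P := {t ∈ range L | distNearestInt (((t : ℕ) : ℝ) * (2 * v)) < 50 / L}
  set T : ℕ → ℝ := fun t => ‖∑ n ∈ range (L - t),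
    (𝐞 (x + w * ↑(n + t) + v * ↑(n + t) ^ 2) : ℂ) * conj (𝐞 (x + w * n + v * n ^ 2) : ℂ)‖
  have hT_le : ∀ t, T t ≤ L := fun t => by
    simp only [T, norm_sum_fourierChar_quadratic_mul_conj]
    exact (norm_geom_sum_le_of_norm_eq_one (Circle.norm_coe _) _).trans
      (by exact_mod_cast L.sub_le t)
  have hT_small : ∀ t : ℕ, ¬distNearestInt (t * (2 * v)) < 50 / L → T t ≤ L / 100 := fun t ht => by
    simp only [T, norm_sum_fourierChar_quadratic_mul_conj]
    have hd := not_lt.mp ht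
    calc _ ≤ 1 / (2 * distNearestInt (t * (2 * v))) :=
          norm_geom_sum_fourierChar_le ((div_pos (by norm_num) hLpos).trans_le hd) _
      _ ≤ 1 / (2 * (50 / L)) := by gcongr
      _ = L / 100 := by field_simp; norm_num
  have hsum : ∑ t ∈ range L, T t ≤ #P * L + L * (L / 100) := by
    rw [← sum_filter_add_sum_filter_not (range L)
      fun t : ℕ => distNearestInt (t * (2 * v)) < 50 / L]
    gcongr
    · simpa using sum_le_card_nsmul P T L fun t _ => hT_le t
    · refine (sum_le_card_nsmul _ T _ fun t ht => hT_small t (mem_filter.mp ht).2).trans ?_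
      rw [nsmul_eq_mul]
      gcongr
      exact_mod_cast (card_filter_le _ _).trans (card_range L).le
  have hvdc := norm_sum_sq_le_two_mul_sum_norm_sum_mul_conj
    (fun n => (𝐞 (x + w * n + v * n ^ 2) : ℂ)) L
  have hS2 : (L : ℝ) ^ 2 ≤ 25 * ‖∑ n ∈ range L, (𝐞 (x + w * n + v * n ^ 2) : ℂ)‖ ^ 2 := by
    nlinarith
  refine le_of_mul_le_mul_left ?_ hLpos
  nlinarith

lemma exists_lt_lt_add_of_div_add_one_lt_card {P : Finset ℕ} {L B : ℕ} (hB : 0 < B)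
    (hP : ∀ t ∈ P, t < L) (hcard : L / B + 1 < #P) :
    ∃ t₁ ∈ P, ∃ t₂ ∈ P, t₁ < t₂ ∧ t₂ < t₁ + B := by
  have hmaps : ∀ t ∈ P, t / B ∈ range (L / B + 1) := fun t ht =>
    mem_range.mpr (Nat.lt_succ_of_le (Nat.div_le_div_right (hP t ht).le))
  obtain ⟨t₁, ht₁, t₂, ht₂, hne, hdiv⟩ :=
    exists_ne_map_eq_of_card_lt_of_maps_to (by rwa [card_range]) hmaps
  have h₁ := Nat.div_add_mod t₁ B
  have h₂ := Nat.div_add_mod t₂ B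
  rw [hdiv] at h₁
  have := Nat.mod_lt t₁ hB
  have := Nat.mod_lt t₂ hB
  rcases hne.lt_or_gt with h | h
  · exact ⟨t₁, ht₁, t₂, ht₂, h, by omega⟩
  · exact ⟨t₂, ht₂, t₁, ht₁, h, by omega⟩

theorem exists_distNearestInt_mul_lt_of_norm_sum_fourierChar (x w v : ℝ) {L : ℕ}
    (hL : 200 < L) (hS : (L : ℝ) ≤ 5 * ‖∑ n ∈ range L, (𝐞 (x + w * n + v * n ^ 2) : ℂ)‖) :
    ∃ r : ℕ, 0 < r ∧ r < 400 ∧ distNearestInt (r * v) < 100 / L := by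
  set P := {t ∈ range L | distNearestInt (((t : ℕ) : ℝ) * (2 * v)) < 50 / L}
  have hcard : L / 200 + 1 < #P := by
    have h₁ : ((L / 200 : ℕ) : ℝ) ≤ L / 200 := Nat.cast_div_le
    have h₂ : (200 : ℝ) < L := by exact_mod_cast hL
    have h₃ := div_le_card_filter_distNearestInt_lt x w v L hS
    have : ((L / 200 : ℕ) : ℝ) + 1 < #P := by linarith
    exact_mod_cast this
  obtain ⟨t₁, ht₁, t₂, ht₂, hlt, hclose⟩ := exists_lt_lt_add_of_div_add_one_lt_card
    (by norm_num) (fun t ht => mem_range.mp (mem_filter.mp ht).1) hcard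
  refine ⟨2 * (t₂ - t₁), by omega, by omega, ?_⟩
  have hr : ((2 * (t₂ - t₁) : ℕ) : ℝ) * v = t₂ * (2 * v) - t₁ * (2 * v) := by
    push_cast [Nat.cast_sub hlt.le]
    ring
  rw [hr]
  calc _ ≤ distNearestInt (t₂ * (2 * v)) + distNearestInt (t₁ * (2 * v)) :=
        distNearestInt_sub_le _ _
    _ < 50 / L + 50 / L := add_lt_add (mem_filter.mp ht₂).2 (mem_filter.mp ht₁).2
    _ = 100 / L := by ring

theorem card_le_two_mul_norm_add_norm_of_cos_nonpos (y : ℕ → ℝ) (c : ℝ) (L : ℕ)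
    (h : ∀ n < L, cos (2 * π * (y n - c)) ≤ 0) :
    (L : ℝ) ≤ 2 * ‖∑ n ∈ range L, (𝐞 (y n) : ℂ)‖ + ‖∑ n ∈ range L, (𝐞 (2 * y n) : ℂ)‖ := by
  have hre : ∀ k : ℝ, (𝐞 (-(k * c)) * ∑ n ∈ range L, (𝐞 (k * y n) : ℂ)).re =
      ∑ n ∈ range L, cos (k * (2 * π * (y n - c))) := fun k => by
    rw [mul_sum, Complex.re_sum]
    refine sum_congr rfl fun n _ => ?_
    rw [← Circle.coe_mul, ← AddChar.map_add_eq_mul, re_fourierChar]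
    ring_nf
  have hnorm : ∀ k : ℝ, -‖∑ n ∈ range L, (𝐞 (k * y n) : ℂ)‖ ≤
      ∑ n ∈ range L, cos (k * (2 * π * (y n - c))) := fun k => by
    have := (abs_le.mp (Complex.abs_re_le_norm
      (𝐞 (-(k * c)) * ∑ n ∈ range L, (𝐞 (k * y n) : ℂ)))).1
    rwa [norm_mul, Circle.norm_coe, one_mul, hre] at this
  -- `1 + 2 cos θ + cos 2θ = 2 cos θ (1 + cos θ)` is nonpositive when `cos θ` is.
  have hpoint : ∑ n ∈ range L, (1 + 2 * cos (1 * (2 * π * (y n - c))) +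
      cos (2 * (2 * π * (y n - c)))) ≤ 0 := by
    refine sum_nonpos fun n hn => ?_
    rw [one_mul, cos_two_mul]
    nlinarith [h n (mem_range.mp hn), neg_one_le_cos (2 * π * (y n - c))]
  rw [sum_add_distrib, sum_add_distrib, ← mul_sum, sum_const, card_range, nsmul_one] at hpoint
  have h₁ := hnorm 1
  have h₂ := hnorm 2
  simp only [one_mul] at h₁ hpoint
  linarith

lemma exists_cos_nonpos_of_fract_lt_half_iff (y : ℕ → ℝ) (L : ℕ)
    (h : ∀ n < L, (Int.fract (y n) < 1 / 2 ↔ Int.fract (y 0) < 1 / 2)) :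
    ∃ c : ℝ, ∀ n < L, cos (2 * π * (y n - c)) ≤ 0 := by
  have hcos : ∀ c u : ℝ, ∀ m : ℤ, 1 / 4 ≤ u - c + m → u - c + m ≤ 3 / 4 →
      cos (2 * π * (u - c)) ≤ 0 := fun c u m h₁ h₂ => by
    rw [← cos_add_int_mul_two_pi _ m]
    apply cos_nonpos_of_pi_div_two_le_of_le <;> nlinarith [pi_pos]
  by_cases h0 : Int.fract (y 0) < 1 / 2
  · refine ⟨3 / 4, fun n hn => hcos _ _ (1 - ⌊y n⌋) ?_ ?_⟩ <;>
    · have hlt := (h n hn).mpr h0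
      have hnonneg := Int.fract_nonneg (y n)
      rw [Int.fract] at hlt hnonneg
      push_cast
      linarith
  · refine ⟨1 / 4, fun n hn => hcos _ _ (-⌊y n⌋) ?_ ?_⟩ <;>
    · have hge := mt (h n hn).mp h0
      have hlt := Int.fract_lt_one (y n)
      rw [Int.fract] at hge hlt
      push_cast
      linarith

theorem exists_distNearestInt_mul_lt_of_fract_lt_half_iff (x w v : ℝ) {L : ℕ} (hL : 200 < L)
    (h : ∀ n < L, (Int.fract (x + w * n + v * n ^ 2) < 1 / 2 ↔ Int.fract x < 1 / 2)) :
    ∃ r : ℕ, 0 < r ∧ r < 800 ∧ distNearestInt (r * v) < 100 / L := by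
  obtain ⟨c, hc⟩ := exists_cos_nonpos_of_fract_lt_half_iff
    (fun n : ℕ => x + w * n + v * n ^ 2) L (by simpa using h)
  have hsum := card_le_two_mul_norm_add_norm_of_cos_nonpos _ c L hc
  by_cases h₁ : (L : ℝ) ≤ 5 * ‖∑ n ∈ range L, (𝐞 (x + w * n + v * n ^ 2) : ℂ)‖
  · obtain ⟨r, hr₀, hr, hd⟩ := exists_distNearestInt_mul_lt_of_norm_sum_fourierChar x w v hL h₁
    exact ⟨r, hr₀, by omega, hd⟩
  · have h₂ : (L : ℝ) ≤ 5 * ‖∑ n ∈ range L, (𝐞 (2 * x + 2 * w * n + 2 * v * n ^ 2) : ℂ)‖ := by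
      simp only [mul_add, mul_assoc] at hsum ⊢
      linarith
    obtain ⟨r, hr₀, hr, hd⟩ :=
      exists_distNearestInt_mul_lt_of_norm_sum_fourierChar (2 * x) (2 * w) (2 * v) hL h₂
    refine ⟨2 * r, by omega, by omega, ?_⟩
    rwa [Nat.cast_mul, Nat.cast_two, mul_comm 2, mul_assoc]

theorem quadratic_not_two_large_general
    (α : ℝ) (δ : ℝ) (hδ : 0 < δ) :
    ∃ (c : ℕ → Bool) (L : ℕ),
      ∀ a : ℕ, ∀ s ∈ {n : ℕ | 1 ≤ n ∧ ∀ m : ℤ, δ < |(n : ℝ) ^ 2 * α - (m : ℝ)|},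
        ∃ n < L, c (a + n * s) ≠ c a := by
  obtain ⟨Λ, hΛ, hdvd⟩ : ∃ Λ : ℕ, 0 < Λ ∧ ∀ r, 0 < r → r < 800 → r ∣ Λ :=
    ⟨Nat.factorial 799, Nat.factorial_pos _, fun r hr₀ hr => Nat.dvd_factorial hr₀ (by omega)⟩
  set L := ⌈100 * (Λ : ℝ) / δ⌉₊ + 201
  have hLpos : (0 : ℝ) < L := by positivity
  have hΛL : (Λ : ℝ) * (100 / L) ≤ δ := by
    have hceil : 100 * (Λ : ℝ) / δ ≤ L :=
      (Nat.le_ceil _).trans (Nat.cast_le.mpr (Nat.le_add_right _ _))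
    rw [div_le_iff₀ hδ] at hceil
    rw [mul_div_assoc', div_le_iff₀ hLpos]
    linarith
  refine ⟨fun n => decide (Int.fract ((n : ℝ) ^ 2 * (α / Λ)) < 1 / 2), L, fun a s hs => ?_⟩
  by_contra! hmono
  have hq : ∀ n : ℕ, ((a : ℝ) + n * s) ^ 2 * (α / Λ) =
      a ^ 2 * (α / Λ) + 2 * a * s * (α / Λ) * n + s ^ 2 * (α / Λ) * n ^ 2 := fun n => by ring
  obtain ⟨r, hr₀, hr, hd⟩ := exists_distNearestInt_mul_lt_of_fract_lt_half_iff
    (a ^ 2 * (α / Λ)) (2 * a * s * (α / Λ)) (s ^ 2 * (α / Λ)) (L := L) (by omega)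
    fun n hn => by simpa [hq] using hmono n hn
  rw [← mul_div_assoc] at hd
  refine lt_irrefl δ ?_
  calc δ < distNearestInt ((s : ℝ) ^ 2 * α) := hs.2 _
    _ ≤ Λ * distNearestInt (r * ((s : ℝ) ^ 2 * α / Λ)) :=
      distNearestInt_le_mul_distNearestInt_of_dvd (hdvd r hr₀ hr) hΛ _
    _ < Λ * (100 / L) := by gcongr
    _ ≤ δ := hΛL

/-- Quadratic (nilsystem) analogue: for irrational `α` and `δ > 0`, the set of `n ≥ 1`
with `‖n²·α‖_{ℝ/ℤ} > δ` is not 2-large. -/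
theorem quadratic_not_two_large
    (α : ℝ) (hα : Irrational α) (δ : ℝ) (hδ : 0 < δ) :
    ∃ (c : ℕ → Bool) (L : ℕ),
      ∀ a : ℕ, ∀ s ∈ {n : ℕ | 1 ≤ n ∧ ∀ m : ℤ, δ < |(n : ℝ) ^ 2 * α - (m : ℝ)|},
        ∃ n < L, c (a + n * s) ≠ c a :=
  quadratic_not_two_large_general α δ hδ
end
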